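/- For any even n ≥ 4, the count of primes p with 2 < p ≤ n and p + 2 prime satisfies D_t(n) ≥ π(n) − π(√(n+2)) − Σ_{p odd prime, p ≤ √(n+2)} #{q prime ≤ n : q ≡ −2 (mod p)}. -/

import Mathlib

open scoped Classical

open Nat

/-!
Every prime `q ≤ n` is either at most `√(n+2)`, or the smaller member of a twin pair, or `q + 2`
is composite. In the last case the least prime factor `p` of `q + 2` satisfies `p² ≤ q + 2 ≤ n + 2`,
so `p ≤ √(n+2)`; it is odd because `q + 2` is, and `p ∣ q + 2` says `q ≡ p - 2 (mod p)`.
A union bound over this covering of the primes up to `n` gives the inequality.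
-/

theorem Nat.modEq_sub_of_dvd_add {p q k : ℕ} (hk : k ≤ p) (h : p ∣ q + k) :
    q ≡ p - k [MOD p] :=
  Nat.ModEq.add_right_cancel' k <| by
    rw [Nat.sub_add_cancel hk]
    exact (Nat.modEq_zero_iff_dvd.mpr h).trans (Nat.modEq_zero_iff_dvd.mpr dvd_rfl).symm

theorem Nat.exists_odd_prime_modEq_sub_two_of_not_prime_add_two {q : ℕ} (hq : Odd q)
    (h : ¬(q + 2).Prime) : ∃ p, p.Prime ∧ Odd p ∧ p * p ≤ q + 2 ∧ q ≡ p - 2 [MOD p] := by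
  have hodd : Odd (q + 2) := hq.add_even even_two
  have hp : (q + 2).minFac.Prime := Nat.minFac_prime (by omega)
  have hdvd : (q + 2).minFac ∣ q + 2 := Nat.minFac_dvd _
  refine ⟨_, hp, hodd.of_dvd_nat hdvd, ?_, Nat.modEq_sub_of_dvd_add hp.two_le hdvd⟩
  simpa [sq] using Nat.minFac_sq_le_self (by omega) h

theorem Nat.Prime.le_sqrt_or_prime_add_two_or_exists_modEq {n q : ℕ} (hq : q.Prime)
    (hqn : q ≤ n) :
    q ≤ Nat.sqrt (n + 2) ∨ (2 < q ∧ (q + 2).Prime) ∨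
      ∃ p, p.Prime ∧ Odd p ∧ p ≤ Nat.sqrt (n + 2) ∧ q ≡ p - 2 [MOD p] := by
  by_cases hqs : q ≤ Nat.sqrt (n + 2)
  · exact .inl hqs
  have h2q : 2 < q := by
    refine hq.two_le.lt_of_ne fun h2 => hqs ?_
    subst h2
    exact Nat.le_sqrt.mpr (by omega)
  by_cases htwin : (q + 2).Prime
  · exact .inr (.inl ⟨h2q, htwin⟩)
  obtain ⟨p, hp, hpodd, hpp, hmod⟩ :=
    exists_odd_prime_modEq_sub_two_of_not_prime_add_two (hq.odd_of_ne_two h2q.ne') htwin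
  exact .inr (.inr ⟨p, hp, hpodd, Nat.le_sqrt.mpr (by omega), hmod⟩)

theorem stmt_8_general (n : ℕ) :
    ((((Finset.range (n + 1)).filter
        (fun p => 2 < p ∧ p.Prime ∧ (p + 2).Prime)).card : ℤ)) ≥
      (Nat.primeCounting n : ℤ) - (Nat.primeCounting (Nat.sqrt (n + 2)) : ℤ) -
        ∑ p ∈ (Finset.range (Nat.sqrt (n + 2) + 1)).filter (fun p => p.Prime ∧ Odd p),
          (((Finset.range (n + 1)).filter
            (fun q => q.Prime ∧ q ≡ p - 2 [MOD p])).card : ℤ) := by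
  set s := Nat.sqrt (n + 2)
  set twins := (Finset.range (n + 1)).filter (fun p => 2 < p ∧ p.Prime ∧ (p + 2).Prime)
  set sievingPrimes := (Finset.range (s + 1)).filter (fun p => p.Prime ∧ Odd p)
  set residueClass := fun p =>
    (Finset.range (n + 1)).filter (fun q => q.Prime ∧ q ≡ p - 2 [MOD p])
  have hcover : primesLE n ⊆ primesLE s ∪ twins ∪ sievingPrimes.biUnion residueClass := by
    intro q hq
    rw [mem_primesLE] at hq
    simp only [Finset.mem_union, Finset.mem_biUnion, mem_primesLE, twins, sievingPrimes,
      residueClass, Finset.mem_filter, Finset.mem_range]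
    rcases hq.2.le_sqrt_or_prime_add_two_or_exists_modEq hq.1 with
      hqs | htwin | ⟨p, hp, hpodd, hps, hmod⟩
    · exact .inl (.inl ⟨hqs, hq.2⟩)
    · exact .inl (.inr ⟨by omega, htwin.1, hq.2, htwin.2⟩)
    · exact .inr ⟨p, ⟨by omega, hp, hpodd⟩, ⟨by omega, hq.2, hmod⟩⟩
  have hcard : primeCounting n ≤
      primeCounting s + twins.card + ∑ p ∈ sievingPrimes, (residueClass p).card := by
    rw [← primesLE_card_eq_primeCounting, ← primesLE_card_eq_primeCounting]
    refine (Finset.card_le_card hcover).trans <| (Finset.card_union_le _ _).trans ?_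
    gcongr
    exacts [Finset.card_union_le _ _, Finset.card_biUnion_le]
  have hcardℤ : (primeCounting n : ℤ) ≤
      primeCounting s + twins.card + ∑ p ∈ sievingPrimes, ((residueClass p).card : ℤ) := by
    exact_mod_cast hcard
  linarith

theorem stmt_8 (n : ℕ) (hn : 4 ≤ n) (he : Even n) :
    ((((Finset.range (n + 1)).filter
        (fun p => 2 < p ∧ p.Prime ∧ (p + 2).Prime)).card : ℤ)) ≥
      (Nat.primeCounting n : ℤ) - (Nat.primeCounting (Nat.sqrt (n + 2)) : ℤ) -
        ∑ p ∈ (Finset.range (Nat.sqrt (n + 2) + 1)).filter (fun p => p.Prime ∧ Odd p),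
          (((Finset.range (n + 1)).filter
            (fun q => q.Prime ∧ q ≡ p - 2 [MOD p])).card : ℤ) :=
  stmt_8_general n
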